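/- arXiv:2402.02673 — 3 statements merged into one kernel-verified Lean document; each statement's English description precedes it below -/
import Mathlib

section
/- For every t ≥ 1 and every stage vector v⃗, the t-stage rule that applies SNTV (the (ℓ_1, Plu)-rule, where Plu^{m,k}(p) = 1 if p = 1 and 0 otherwise) at every stage satisfies Solid Coalition. In particular, STV (the (m−1)-stage rule with vector (m−1, m−2, …, 1) applying SNTV at each stage) satisfies Solid Coalition. -/
/-!
Each voter ranks at most one candidate of the pool first, so the first-place counts of `c` and
of the `k` members of a committee `S ∌ c` add up to at most `n ≤ k · firstCount c`. Hence some
member of `S` has strictly fewer first places than `c`, and swapping it for `c` raises the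
plurality score: `S` was not optimal. Passing to a smaller pool that still contains `c` can only
increase `c`'s first places, and the last target size is the smallest one, so the quota holds at
every stage of the multi-stage rule.
-/

/-- A multi-winner voting rule: candidate pool, list of voters (given by injective
ranking functions, smaller value = more preferred), target size ↦ winning committees. -/
abbrev MWRule (α : Type) : Type := Finset α → List (α → ℕ) → ℕ → Set (Finset α)

/-- A multi-winner voting rule outputs committees of the prescribed size drawn
from the candidate pool. -/
def IsMWRule {α : Type} (R : MWRule α) : Prop :=
  ∀ (C : Finset α) (V : List (α → ℕ)) (k : ℕ), ∀ S ∈ R C V k, S ⊆ C ∧ S.card = k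

/-- Every voter of `V` has a strict (injective) preference on the candidate set `C`. -/
def StrictPrefs {α : Type} (C : Finset α) (V : List (α → ℕ)) : Prop :=
  ∀ v ∈ V, Set.InjOn v ↑C

/-- Voter `v` ranks candidate `c` first in the pool `C`. -/
def RanksFirst {α : Type} (v : α → ℕ) (C : Finset α) (c : α) : Prop :=
  c ∈ C ∧ ∀ c' ∈ C, c' ≠ c → v c < v c'

instance {α : Type} [DecidableEq α] (v : α → ℕ) (C : Finset α) (c : α) :
    Decidable (RanksFirst v C c) :=
  inferInstanceAs (Decidable (c ∈ C ∧ ∀ c' ∈ C, c' ≠ c → v c < v c'))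

/-- The number of voters in `V` ranking candidate `c` first in the pool `C`. -/
def firstCount {α : Type} [DecidableEq α] (V : List (α → ℕ)) (C : Finset α) (c : α) : ℕ :=
  V.countP fun v => decide (RanksFirst v C c)

/-- Solid Coalition: whenever at least `n/k` voters rank some candidate `c` first,
`c` belongs to every winning committee. -/
def SolidCoalition {α : Type} [DecidableEq α] (R : MWRule α) : Prop :=
  ∀ (C : Finset α) (V : List (α → ℕ)), StrictPrefs C V → V ≠ [] →
    ∀ k : ℕ, 1 ≤ k → k < C.card →
      ∀ c : α, V.length ≤ k * firstCount V C c →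
        ∀ S ∈ R C V k, c ∈ S

/-- The winning committees of a multi-stage rule, specified by a list of
(rule, target size) pairs: the winning committee of each stage is the candidate
pool for the next stage. -/
def MultiStageWinners {α : Type} :
    List (MWRule α × ℕ) → Finset α → List (α → ℕ) → Set (Finset α)
  | [], C, _ => {C}
  | (R, k) :: rest, C, V => {S | ∃ S₁ ∈ R C V k, S ∈ MultiStageWinners rest S₁ V}

/-- The plurality (SNTV) score of a committee `S` on the pool `C`:
`Σ_{v ∈ V} Σ_{c ∈ S} Plu(p_v(c))` where `Plu(p) = 1` iff `p = 1`. -/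
def pluScore {α : Type} [DecidableEq α] (C : Finset α) (V : List (α → ℕ))
    (S : Finset α) : ℕ :=
  (V.map fun v => (S.filter fun c => RanksFirst v C c).card).sum

/-- SNTV: the `(ℓ₁, Plu)`-rule, returning the size-`k` committees of maximum
plurality score. -/
def SNTV {α : Type} [DecidableEq α] : MWRule α := fun C V k =>
  {S | S ⊆ C ∧ S.card = k ∧ ∀ T ⊆ C, T.card = k → pluScore C V T ≤ pluScore C V S}

namespace RanksFirst

variable {α : Type} {v : α → ℕ} {C : Finset α} {c : α}

theorem unique {c' : α} (h : RanksFirst v C c) (h' : RanksFirst v C c') : c = c' := by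
  by_contra hne
  exact (h.2 c' h'.1 (Ne.symm hne)).asymm (h'.2 c h.1 hne)

theorem mono {S : Finset α} (h : RanksFirst v C c) (hSC : S ⊆ C) (hc : c ∈ S) :
    RanksFirst v S c :=
  ⟨hc, fun c' hc' => h.2 c' (hSC hc')⟩

end RanksFirst

section Plurality

variable {α : Type} [DecidableEq α] {C : Finset α} {V : List (α → ℕ)} {c : α}

theorem card_filter_ranksFirst_le_one (v : α → ℕ) (C S : Finset α) :
    (S.filter fun c => RanksFirst v C c).card ≤ 1 :=
  Finset.card_le_one.2 fun _ ha _ hb => (Finset.mem_filter.1 ha).2.unique (Finset.mem_filter.1 hb).2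

theorem mem_of_firstCount_pos (h : 0 < firstCount V C c) : c ∈ C := by
  obtain ⟨v, -, hv⟩ := List.countP_pos_iff.1 h
  exact (of_decide_eq_true hv).1

theorem firstCount_pos_of_length_le_mul (hVne : V ≠ []) {k : ℕ}
    (h : V.length ≤ k * firstCount V C c) : 0 < firstCount V C c := by
  refine Nat.pos_of_ne_zero fun h0 => hVne ?_
  simpa [h0] using h

theorem firstCount_le_firstCount_of_subset {S : Finset α} (hSC : S ⊆ C) (hc : c ∈ S) :
    firstCount V C c ≤ firstCount V S c :=
  List.countP_mono_left fun _ _ h =>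
    decide_eq_true ((of_decide_eq_true h).mono hSC hc)

theorem pluScore_eq_sum_firstCount (S : Finset α) :
    pluScore C V S = ∑ d ∈ S, firstCount V C d := by
  induction V with
  | nil => simp [pluScore, firstCount]
  | cons v V ih =>
    simp only [pluScore, firstCount, List.map_cons, List.sum_cons, List.countP_cons] at ih ⊢
    rw [Finset.sum_add_distrib, ← ih, Finset.card_filter, add_comm]
    simp

theorem pluScore_le_length (S : Finset α) : pluScore C V S ≤ V.length := by
  have := List.sum_le_card_nsmul (V.map _) 1 (by
    simpa using fun v _ => card_filter_ranksFirst_le_one v C S)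
  simpa [pluScore] using this

theorem sum_firstCount_le_length (S : Finset α) : ∑ d ∈ S, firstCount V C d ≤ V.length :=
  pluScore_eq_sum_firstCount (C := C) S ▸ pluScore_le_length S

theorem pluScore_insert_erase {S : Finset α} {d : α} (hd : d ∈ S) (hc : c ∉ S) :
    pluScore C V (insert c (S.erase d)) + firstCount V C d
      = pluScore C V S + firstCount V C c := by
  have hcS' : c ∉ S.erase d := fun h => hc (Finset.mem_of_mem_erase h)
  rw [pluScore_eq_sum_firstCount, pluScore_eq_sum_firstCount, Finset.sum_insert hcS',
    ← Finset.add_sum_erase S _ hd]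
  ring

end Plurality

section SNTV

variable {α : Type} [DecidableEq α] {C : Finset α} {V : List (α → ℕ)} {c : α}

theorem exists_firstCount_lt_of_notMem {S : Finset α} {k : ℕ} (hScard : S.card = k)
    (hquota : V.length ≤ k * firstCount V C c) (hpos : 0 < firstCount V C c) (hcS : c ∉ S) :
    ∃ d ∈ S, firstCount V C d < firstCount V C c := by
  by_contra! hge
  have hS : k * firstCount V C c ≤ ∑ d ∈ S, firstCount V C d := by
    simpa [hScard] using Finset.card_nsmul_le_sum S _ _ hge
  have hinsert := sum_firstCount_le_length (V := V) (C := C) (insert c S)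
  rw [Finset.sum_insert hcS] at hinsert
  omega

theorem mem_of_mem_SNTV (hVne : V ≠ []) {k : ℕ} (hquota : V.length ≤ k * firstCount V C c)
    {S : Finset α} (hS : S ∈ SNTV C V k) : c ∈ S := by
  obtain ⟨hSC, hScard, hmax⟩ := hS
  have hpos := firstCount_pos_of_length_le_mul hVne hquota
  by_contra hcS
  obtain ⟨d, hd, hlt⟩ := exists_firstCount_lt_of_notMem hScard hquota hpos hcS
  have hTC : insert c (S.erase d) ⊆ C :=
    Finset.insert_subset (mem_of_firstCount_pos hpos) ((Finset.erase_subset d S).trans hSC)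
  have hTcard : (insert c (S.erase d)).card = k := by
    rw [Finset.card_insert_of_notMem (fun h => hcS (Finset.mem_of_mem_erase h)),
      Finset.card_erase_add_one hd, hScard]
  have hopt := hmax _ hTC hTcard
  have hswap := pluScore_insert_erase (V := V) (C := C) hd hcS
  omega

theorem mem_of_mem_multiStageWinners_SNTV (hVne : V ≠ []) (ks : List ℕ) (hcC : c ∈ C)
    (hquota : ∀ k ∈ ks, V.length ≤ k * firstCount V C c) :
    ∀ S ∈ MultiStageWinners (ks.map fun k => ((SNTV : MWRule α), k)) C V, c ∈ S := by
  induction ks generalizing C with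
  | nil =>
    rintro S rfl
    exact hcC
  | cons k ks ih =>
    rintro S ⟨S₁, hS₁, hS⟩
    have hcS₁ : c ∈ S₁ := mem_of_mem_SNTV hVne (hquota k List.mem_cons_self) hS₁
    refine ih hcS₁ (fun k' hk' => ?_) S hS
    exact (hquota k' (List.mem_cons_of_mem k hk')).trans
      (Nat.mul_le_mul_left k' (firstCount_le_firstCount_of_subset hS₁.1 hcS₁))

end SNTV

theorem multistage_SNTV_solid_coalition_general {α : Type} [DecidableEq α]
    (ks : List ℕ) (hkne : ks ≠ [])
    (C : Finset α) (V : List (α → ℕ)) (hVne : V ≠ [])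
    (hchain : List.Chain (· > ·) C.card ks)
    (c : α) (hc : V.length ≤ ks.getLast hkne * firstCount V C c) :
    ∀ S ∈ MultiStageWinners (ks.map fun k => ((SNTV : MWRule α), k)) C V, c ∈ S := by
  have hlast_le : ∀ k ∈ ks, ks.getLast hkne ≤ k := fun k hk =>
    ((List.isChain_iff_pairwise.1 hchain).of_cons.imp le_of_lt).rel_getLast hk
  exact mem_of_mem_multiStageWinners_SNTV hVne ks
    (mem_of_firstCount_pos (firstCount_pos_of_length_le_mul hVne hc))
    fun k hk => hc.trans (Nat.mul_le_mul_right _ (hlast_le k hk))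

/-- For every `t ≥ 1` (the number of stages, `t = ks.length`) and
every stage vector `ks` with `|C| > k_1 > … > k_t ≥ 1`, the `t`-stage rule
applying SNTV at every stage satisfies Solid Coalition (in particular this covers
STV, which is the `(m-1)`-stage rule with vector `(m-1, …, 1)` applying SNTV at
each stage): if at least `n / k_t` voters rank `c` first, then `c` belongs to
every winning committee. -/
theorem multistage_SNTV_solid_coalition {α : Type} [DecidableEq α]
    (ks : List ℕ) (hkne : ks ≠ [])
    (C : Finset α) (V : List (α → ℕ)) (hV : StrictPrefs C V) (hVne : V ≠ [])
    (hchain : List.Chain (· > ·) C.card ks) (hpos : ∀ k ∈ ks, 1 ≤ k)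
    (c : α) (hc : V.length ≤ ks.getLast hkne * firstCount V C c) :
    ∀ S ∈ MultiStageWinners (ks.map fun k => ((SNTV : MWRule α), k)) C V, c ∈ S :=
  multistage_SNTV_solid_coalition_general ks hkne C V hVne hchain c hc
end

section
/- For every t ≥ 2, the t-stage (ℓ_1, Borda)-rule, i.e., the multi-stage rule applying the Borda rule with position scores Borda^{m,k}(p) = m − p at every stage, does not satisfy Committee Monotonicity. -/
/-- Position (1-indexed) of candidate `c` in voter `v`'s induced ranking on the
pool `C` (voters are ranking functions, smaller value = more preferred). -/
def posIn {α : Type} (v : α → ℕ) (C : Finset α) (c : α) : ℕ :=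
  (C.filter fun c' => v c' ≤ v c).card

/-- The two norms parameterizing score-based rules. -/
inductive ScoreNorm : Type
  | l1
  | lmax

/-- Voter `v`'s score for a committee `S` on the pool `C` with target size `k`,
under the `(β, γ)`-rule (`γ m k p` is the position score of position `p` for
`m` candidates and target size `k`). -/
noncomputable def voterScore {α : Type} (β : ScoreNorm) (γ : ℕ → ℕ → ℕ → ℝ)
    (C : Finset α) (k : ℕ) (v : α → ℕ) (S : Finset α) : ℝ :=
  match β with
  | .l1 => ∑ c ∈ S, γ C.card k (posIn v C c)
  | .lmax => sSup ((fun c => γ C.card k (posIn v C c)) '' (S : Set α))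

/-- Total score `Σ_{v ∈ V} f_v(S)` of a committee. -/
noncomputable def totalScore {α : Type} (β : ScoreNorm) (γ : ℕ → ℕ → ℕ → ℝ)
    (C : Finset α) (V : List (α → ℕ)) (k : ℕ) (S : Finset α) : ℝ :=
  (V.map fun v => voterScore β γ C k v S).sum

/-- Winning committees of the single-stage `(β, γ)`-rule: the size-`k` committees
maximizing the total score. -/
def scoreWinners {α : Type} (β : ScoreNorm) (γ : ℕ → ℕ → ℕ → ℝ)
    (C : Finset α) (V : List (α → ℕ)) (k : ℕ) : Set (Finset α) :=
  {S | S ⊆ C ∧ S.card = k ∧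
    ∀ T ⊆ C, T.card = k → totalScore β γ C V k T ≤ totalScore β γ C V k S}

/-- Winning committees of the multi-stage `(β, γ)`-rule for stage vector `ks`:
the winning committee of each stage is the candidate pool of the next stage. -/
def msWinners {α : Type} (β : ScoreNorm) (γ : ℕ → ℕ → ℕ → ℝ) :
    List ℕ → Finset α → List (α → ℕ) → Set (Finset α)
  | [], C, _ => {C}
  | k :: ks, C, V => {S | ∃ S₁ ∈ scoreWinners β γ C V k, S ∈ msWinners β γ ks S₁ V}

/-- Each `γ^{m,k}` is non-increasing on the positions `1, …, m`. -/
def GammaMono (γ : ℕ → ℕ → ℕ → ℝ) : Prop :=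
  ∀ m k p q : ℕ, 1 ≤ p → p ≤ q → q ≤ m → γ m k q ≤ γ m k p

/-- Rationality of a `(β, γ)`-rule: for every pair `(m, k)` with `m > k ≥ 1`,
`γ^{m,k}(1) > γ^{m,k}(m)` when `β = ℓ₁`, and `γ^{m,k}(1) > γ^{m,k}(m-k+1)` when
`β = ℓ_max`. -/
def RationalRule : ScoreNorm → (ℕ → ℕ → ℕ → ℝ) → Prop
  | .l1, γ => ∀ m k : ℕ, 1 ≤ k → k < m → γ m k m < γ m k 1
  | .lmax, γ => ∀ m k : ℕ, 1 ≤ k → k < m → γ m k (m - k + 1) < γ m k 1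

/-- A valid stage vector for the candidate set `C`: `|C| > k_1 > … > k_t ≥ 1`. -/
def ValidVec {α : Type} (C : Finset α) (ks : List ℕ) : Prop :=
  List.Chain (· > ·) C.card ks ∧ ∀ k ∈ ks, 1 ≤ k

/-- Committee Monotonicity for the `t`-stage `(β, γ)`-rule: for every election
(over any candidate type) and all `t`-dimensional stage vectors `ks₁`, `ks₂` with
`k¹_t + 1 = k²_t`, (i) every winning committee for `ks₁` extends to a winning
committee for `ks₂`, and (ii) every winning committee for `ks₂` contains a
winning committee for `ks₁`. -/
def MSCommitteeMonotone (β : ScoreNorm) (γ : ℕ → ℕ → ℕ → ℝ) (t : ℕ) : Prop :=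
  ∀ (α : Type) (C : Finset α) (V : List (α → ℕ)), StrictPrefs C V →
    ∀ (ks₁ ks₂ : List ℕ) (h₁ : ks₁ ≠ []) (h₂ : ks₂ ≠ []),
      ks₁.length = t → ks₂.length = t → ValidVec C ks₁ → ValidVec C ks₂ →
      ks₁.getLast h₁ + 1 = ks₂.getLast h₂ →
      (∀ S ∈ msWinners β γ ks₁ C V, ∃ S' ∈ msWinners β γ ks₂ C V, S ⊂ S') ∧
      (∀ S ∈ msWinners β γ ks₂ C V, ∃ S' ∈ msWinners β γ ks₁ C V, S' ⊂ S)

/-! The counterexample has four real candidates `0, 1, 2, 3` and seven voters, two ranking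
`0 > 1 > 3 > 2`, two `2 > 0 > 1 > 3` and three `1 > 2 > 0 > 3`, giving Borda scores
`13, 15, 12, 2`. With final stages `(2, 1)` the rule keeps `{0, 1}` and then `0` (scores `4 > 3`
on that pool); with `(3, 2)` it keeps `{0, 1, 2}` and then `{1, 2}` (scores `6 < 7, 8`), which
does not contain `0`. Longer stage vectors are padded in front by stages that each remove one
dummy candidate ranked below everybody else by every voter. -/

open Finset

theorem Finset.sum_lt_sum_of_forall_sdiff_lt {ι M : Type*} [DecidableEq ι] [AddCommMonoid M]
    [LinearOrder M] [IsOrderedCancelAddMonoid M] {s t : Finset ι} {w : ι → M}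
    (hcard : t.card = s.card) (hne : t ≠ s) (h : ∀ a ∈ s \ t, ∀ b ∈ t \ s, w b < w a) :
    ∑ i ∈ t, w i < ∑ i ∈ s, w i := by
  have hts : (t \ s).Nonempty :=
    sdiff_nonempty.2 fun hsub => hne (eq_of_subset_of_card_le hsub hcard.ge)
  have hst : (s \ t).Nonempty := by
    rw [← card_pos, ← card_sdiff_comm hcard]
    exact hts.card_pos
  obtain ⟨b, hb, hbmax⟩ := (t \ s).exists_max_image w hts
  calc ∑ i ∈ t, w i = ∑ i ∈ t ∩ s, w i + ∑ i ∈ t \ s, w i :=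
        (sum_inter_add_sum_sdiff t s w).symm
    _ ≤ ∑ i ∈ t ∩ s, w i + (t \ s).card • w b := by grw [sum_le_card_nsmul _ _ _ hbmax]
    _ = ∑ i ∈ s ∩ t, w i + ∑ _i ∈ s \ t, w b := by
      rw [inter_comm, sum_const, card_sdiff_comm hcard]
    _ < ∑ i ∈ s ∩ t, w i + ∑ i ∈ s \ t, w i :=
      add_lt_add_right (sum_lt_sum_of_nonempty hst fun a ha => h a ha b hb) _
    _ = ∑ i ∈ s, w i := sum_inter_add_sum_sdiff s t w

section Position

variable {α : Type} (v : α → ℕ) (C : Finset α)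

theorem posIn_le_card (c : α) : posIn v C c ≤ C.card :=
  card_filter_le _ _

theorem posIn_eq_card {d : α} (h : ∀ c ∈ C, v c ≤ v d) : posIn v C d = C.card :=
  congrArg card (filter_true_of_mem h)

theorem posIn_lt_card {c d : α} (hd : d ∈ C) (h : v c < v d) : posIn v C c < C.card :=
  card_lt_card (filter_ssubset.2 ⟨d, hd, by omega⟩)

end Position

theorem totalScore_l1 {α : Type} (γ : ℕ → ℕ → ℕ → ℝ) (C : Finset α) (V : List (α → ℕ))
    (k : ℕ) (S : Finset α) :
    totalScore .l1 γ C V k S = ∑ c ∈ S, (V.map fun v => γ C.card k (posIn v C c)).sum := by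
  induction V with
  | nil => simp [totalScore]
  | cons v V ih => simp_all [totalScore, voterScore, sum_add_distrib]

theorem msWinners_cons_of_scoreWinners_eq {α : Type} {β : ScoreNorm} {γ : ℕ → ℕ → ℕ → ℝ}
    {C S : Finset α} {V : List (α → ℕ)} {k : ℕ} (ks : List ℕ)
    (h : scoreWinners β γ C V k = {S}) :
    msWinners β γ (k :: ks) C V = msWinners β γ ks S V := by
  ext T
  simp [msWinners, h]

noncomputable def borda : ℕ → ℕ → ℕ → ℝ := fun m _ p => (m : ℝ) - (p : ℝ)

def bordaScore {α : Type} (C : Finset α) (V : List (α → ℕ)) (c : α) : ℕ :=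
  (V.map fun v => C.card - posIn v C c).sum

section Borda

variable {α : Type} {C : Finset α} {V : List (α → ℕ)} {k : ℕ}

theorem totalScore_borda (S : Finset α) :
    totalScore .l1 borda C V k S = ∑ c ∈ S, (bordaScore C V c : ℝ) := by
  simp only [totalScore_l1, bordaScore, borda, Nat.cast_list_sum, List.map_map]
  refine sum_congr rfl fun c _ => congrArg List.sum (List.map_congr_left fun v _ => ?_)
  simp [Nat.cast_sub (posIn_le_card v C c)]

theorem scoreWinners_borda_eq_singleton {S : Finset α} (hSC : S ⊆ C) (hS : S.card = k)
    (htop : ∀ c ∈ S, ∀ c' ∈ C, c' ∉ S → bordaScore C V c' < bordaScore C V c) :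
    scoreWinners .l1 borda C V k = {S} := by
  have hlt : ∀ T ⊆ C, T.card = k → T ≠ S →
      totalScore .l1 borda C V k T < totalScore .l1 borda C V k S := by
    intro T hTC hT hne
    classical
    rw [totalScore_borda, totalScore_borda]
    refine sum_lt_sum_of_forall_sdiff_lt (hT.trans hS.symm) hne fun a ha b hb => ?_
    rw [mem_sdiff] at ha hb
    exact_mod_cast htop a ha.1 b (hTC hb.1) hb.2
  ext T
  refine ⟨fun ⟨hTC, hT, hmax⟩ => ?_, fun hT => ?_⟩
  · by_contra hne
    exact (hmax S hSC hS).not_gt (hlt T hTC hT hne)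
  · rw [Set.mem_singleton_iff.1 hT]
    refine ⟨hSC, hS, fun T hTC hT => ?_⟩
    rcases eq_or_ne T S with rfl | hne
    exacts [le_rfl, (hlt T hTC hT hne).le]

theorem scoreWinners_borda_eq_erase_of_last [DecidableEq α] {d : α} (hV : V ≠ [])
    (hd : d ∈ C) (hlast : ∀ v ∈ V, ∀ c ∈ C, c ≠ d → v c < v d) (hk : k + 1 = C.card) :
    scoreWinners .l1 borda C V k = {C.erase d} := by
  refine scoreWinners_borda_eq_singleton (erase_subset d C)
    (by rw [card_erase_of_mem hd]; omega) ?_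
  intro c hc c' hc' hc'S
  rw [show c' = d by simpa [hc'] using hc'S]
  obtain ⟨hcd, hcC⟩ := mem_erase.1 hc
  have hzero : bordaScore C V d = 0 := by
    refine List.sum_eq_zero fun x hx => ?_
    obtain ⟨v, hv, rfl⟩ := List.mem_map.1 hx
    rw [posIn_eq_card v C fun b hb => ?_, Nat.sub_self]
    rcases eq_or_ne b d with rfl | hbd
    exacts [le_rfl, (hlast v hv b hb hbd).le]
  obtain ⟨v, hv⟩ := List.exists_mem_of_ne_nil V hV
  have hpos : 0 < C.card - posIn v C c :=
    Nat.sub_pos_of_lt (posIn_lt_card v C hd (hlast v hv c hcC hcd))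
  rw [hzero, bordaScore]
  exact lt_of_lt_of_le hpos (List.le_sum_of_mem (List.mem_map_of_mem hv))

end Borda

def countdown (n : ℕ) : ℕ → List ℕ
  | 0 => []
  | j + 1 => (n + j) :: countdown n j

theorem length_countdown (n j : ℕ) : (countdown n j).length = j := by
  induction j with
  | zero => rfl
  | succ j ih => simp [countdown, ih]

theorem validVec_countdown_append {n : ℕ} {l : List ℕ} (hn : 1 ≤ n) (hl : ValidVec (range n) l)
    (j : ℕ) : ValidVec (range (n + j)) (countdown n j ++ l) := by
  induction j with
  | zero => exact hl
  | succ j ih =>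
    obtain ⟨hchain, hpos⟩ := ih
    rw [card_range] at hchain
    refine ⟨?_, ?_⟩
    · rw [card_range]
      exact List.IsChain.cons_cons (by omega) hchain
    · simp only [countdown, List.cons_append, List.mem_cons]
      rintro k (rfl | hk)
      exacts [by omega, hpos k hk]

theorem msWinners_countdown_append {n : ℕ} {V : List (ℕ → ℕ)} (hV : V ≠ [])
    (hlast : ∀ v ∈ V, ∀ m, n ≤ m → ∀ c < m, v c < v m) (l : List ℕ) (j : ℕ) :
    msWinners .l1 borda (countdown n j ++ l) (range (n + j)) V
      = msWinners .l1 borda l (range n) V := by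
  induction j with
  | zero => rfl
  | succ j ih =>
    have herase : scoreWinners .l1 borda (range (n + j + 1)) V (n + j) = {range (n + j)} := by
      rw [scoreWinners_borda_eq_erase_of_last hV (self_mem_range_succ _)
        (fun v hv c hc hcd => hlast v hv _ (by omega) c (by rw [mem_range] at hc; omega))
        (card_range _).symm,
        range_add_one, erase_insert notMem_range_self]
    exact (msWinners_cons_of_scoreWinners_eq _ herase).trans ih

theorem Equiv.Perm.apply_lt_apply_of_fixed_ge {n c m : ℕ} (σ : Equiv.Perm ℕ)
    (hσ : ∀ x, n ≤ x → σ x = x) (hm : n ≤ m) (hc : c < m) : σ c < σ m := by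
  rw [hσ m hm]
  by_cases hcn : n ≤ c
  · rwa [hσ c hcn]
  · by_contra! h
    have hfix : σ (σ c) = σ c := hσ _ (hm.trans h)
    rw [σ.injective hfix] at h
    omega

namespace BordaCounterexample

-- `σ c` is the rank of candidate `c`, counted from `0`.
def profile : List (Equiv.Perm ℕ) :=
  [Equiv.swap 2 3, Equiv.swap 2 3,
   Equiv.swap 0 1 * Equiv.swap 1 2, Equiv.swap 0 1 * Equiv.swap 1 2,
   Equiv.swap 1 2 * Equiv.swap 0 1, Equiv.swap 1 2 * Equiv.swap 0 1,
   Equiv.swap 1 2 * Equiv.swap 0 1]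

def voters : List (ℕ → ℕ) := profile.map (⇑)

theorem apply_eq_self_of_mem_profile {σ : Equiv.Perm ℕ} (hσ : σ ∈ profile) {x : ℕ} (hx : 4 ≤ x) :
    σ x = x := by
  simp only [profile, List.mem_cons, List.not_mem_nil, or_false] at hσ
  rcases hσ with rfl | rfl | rfl | rfl | rfl | rfl | rfl <;>
    simp [Equiv.swap_apply_of_ne_of_ne, show x ≠ 0 by omega, show x ≠ 1 by omega,
      show x ≠ 2 by omega, show x ≠ 3 by omega]

theorem strictPrefs_voters (C : Finset ℕ) : StrictPrefs C voters := by
  intro v hv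
  obtain ⟨σ, -, rfl⟩ := List.mem_map.1 hv
  exact σ.injective.injOn

theorem voters_apply_lt_apply {v : ℕ → ℕ} (hv : v ∈ voters) {m : ℕ} (hm : 4 ≤ m) {c : ℕ}
    (hc : c < m) : v c < v m := by
  obtain ⟨σ, hσ, rfl⟩ := List.mem_map.1 hv
  exact σ.apply_lt_apply_of_fixed_ge (fun x => apply_eq_self_of_mem_profile hσ) hm hc

theorem msWinners_two_one : msWinners .l1 borda [2, 1] (range 4) voters = {{0}} := by
  have h₂ : scoreWinners .l1 borda (range 4) voters 2 = {{0, 1}} :=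
    scoreWinners_borda_eq_singleton (by decide) (by decide) (by decide)
  have h₁ : scoreWinners .l1 borda {0, 1} voters 1 = {{0}} :=
    scoreWinners_borda_eq_singleton (by decide) (by decide) (by decide)
  rw [msWinners_cons_of_scoreWinners_eq _ h₂, msWinners_cons_of_scoreWinners_eq _ h₁]
  rfl

theorem msWinners_three_two : msWinners .l1 borda [3, 2] (range 4) voters = {{1, 2}} := by
  have h₃ : scoreWinners .l1 borda (range 4) voters 3 = {{0, 1, 2}} :=
    scoreWinners_borda_eq_singleton (by decide) (by decide) (by decide)
  have h₂ : scoreWinners .l1 borda {0, 1, 2} voters 2 = {{1, 2}} :=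
    scoreWinners_borda_eq_singleton (by decide) (by decide) (by decide)
  rw [msWinners_cons_of_scoreWinners_eq _ h₃, msWinners_cons_of_scoreWinners_eq _ h₂]
  rfl

end BordaCounterexample

open BordaCounterexample

/-- For every `t ≥ 2`, the `t`-stage `(ℓ₁, Borda)`-rule, applying
the Borda rule with position scores `Borda^{m,k}(p) = m − p` at every stage, does
not satisfy Committee Monotonicity. -/
theorem multistage_borda_not_committee_monotone (t : ℕ) (ht : 2 ≤ t) :
    ¬ MSCommitteeMonotone ScoreNorm.l1 (fun m _ p => (m : ℝ) - (p : ℝ)) t := by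
  obtain ⟨j, rfl⟩ : ∃ j, t = j + 2 := ⟨t - 2, by omega⟩
  show ¬ MSCommitteeMonotone .l1 borda (j + 2)
  intro hmono
  have hV : voters ≠ [] := by simp [voters, profile]
  have reduce :=
    msWinners_countdown_append hV fun v hv m hm c hc => voters_apply_lt_apply hv hm hc
  have hvalid {a b : ℕ} (ha : a < 4) (hab : b < a) (hb : 1 ≤ b) :
      ValidVec (range (4 + j)) (countdown 4 j ++ [a, b]) :=
    validVec_countdown_append (by norm_num)
      ⟨.cons_cons ha (.cons_cons hab (.singleton b)), by simp [hb, hb.trans hab.le]⟩ j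
  obtain ⟨S, hS, h0S⟩ := (hmono ℕ (range (4 + j)) voters (strictPrefs_voters _)
    (countdown 4 j ++ [2, 1]) (countdown 4 j ++ [3, 2]) (by simp) (by simp)
    (by simp [length_countdown]) (by simp [length_countdown])
    (hvalid (by norm_num) (by norm_num) le_rfl)
    (hvalid (by norm_num) (by norm_num) (by norm_num))
    (by simp)).1 {0} (by simp [reduce, msWinners_two_one])
  rw [reduce, msWinners_three_two, Set.mem_singleton_iff] at hS
  subst hS
  exact absurd h0S (by decide)
end

section
/- Let t ≥ 2 and let 𝓡 be the t-stage ω-Thiele rule, where the single-stage ω-Thiele rule satisfies Consistency and there exists an integer i_0 ≥ 2 such that ω(i_0−1) − ω(i_0−2) ≠ ω(i_0) − ω(i_0−1). Then 𝓡 does not satisfy Consistency: there exist a candidate set C, voter lists V_1 and V_2 (given by approval ballots) and a stage vector v⃗ such that 𝓡((C,V_1), v⃗) ∩ 𝓡((C,V_2), v⃗) ≠ ∅ but 𝓡((C, V_1 + V_2), v⃗) ≠ 𝓡((C,V_1), v⃗) ∩ 𝓡((C,V_2), v⃗). -/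
/-- The ω-Thiele score of a committee `S`, given voters identified with their
approval ballots: `Σ_{v ∈ V} ω(|S ∩ A_v|)`. -/
noncomputable def thieleScore {α : Type} [DecidableEq α] (ω : ℕ → ℝ)
    (V : List (Finset α)) (S : Finset α) : ℝ :=
  (V.map fun A => ω (S ∩ A).card).sum

/-- Winning committees of the single-stage ω-Thiele rule on the candidate pool
`C` with target size `k`: all size-`k` committees maximizing the ω-Thiele score. -/
def thieleWinners {α : Type} [DecidableEq α] (ω : ℕ → ℝ)
    (C : Finset α) (V : List (Finset α)) (k : ℕ) : Set (Finset α) :=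
  {S | S ⊆ C ∧ S.card = k ∧
    ∀ T ⊆ C, T.card = k → thieleScore ω V T ≤ thieleScore ω V S}

/-- Winning committees of the multi-stage ω-Thiele rule for stage vector `ks`,
applying the same ω-Thiele method with the same approval ballots at every stage:
the winning committee of each stage is the candidate pool of the next stage. -/
def msThiele {α : Type} [DecidableEq α] (ω : ℕ → ℝ) :
    List ℕ → Finset α → List (Finset α) → Set (Finset α)
  | [], C, _ => {C}
  | k :: ks, C, V => {S | ∃ S₁ ∈ thieleWinners ω C V k, S ∈ msThiele ω ks S₁ V}

/-- Consistency of the single-stage ω-Thiele rule. -/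
def ThieleConsistent (ω : ℕ → ℝ) : Prop :=
  ∀ (α : Type) [DecidableEq α] (C : Finset α) (V₁ V₂ : List (Finset α)),
    (∀ A ∈ V₁, A ⊆ C) → (∀ A ∈ V₂, A ⊆ C) →
    ∀ k : ℕ, 1 ≤ k → k < C.card →
    (thieleWinners ω C V₁ k ∩ thieleWinners ω C V₂ k).Nonempty →
    thieleWinners ω C (V₁ ++ V₂) k = thieleWinners ω C V₁ k ∩ thieleWinners ω C V₂ k

/-- Consistency of the `t`-stage ω-Thiele rule. -/
def MSThieleConsistent (ω : ℕ → ℝ) (t : ℕ) : Prop :=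
  ∀ (α : Type) [DecidableEq α] (C : Finset α) (V₁ V₂ : List (Finset α)),
    (∀ A ∈ V₁, A ⊆ C) → (∀ A ∈ V₂, A ⊆ C) →
    ∀ (ks : List ℕ), ks ≠ [] → ks.length = t →
      List.Chain (· > ·) C.card ks → (∀ k ∈ ks, 1 ≤ k) →
    (msThiele ω ks C V₁ ∩ msThiele ω ks C V₂).Nonempty →
    msThiele ω ks C (V₁ ++ V₂) = msThiele ω ks C V₁ ∩ msThiele ω ks C V₂

/-!
Thiele scores are additive over voters, so a single stage is consistent; two stages are not.
Many voters approving a block `Z` keep `Z` inside every committee, and the remaining voters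
approve `D ∪ F` with `D ⊆ Z`, `#D = i` and `F ⊆ {0, 1, 2}`, so that they score `ω (i + #(S ∩ F))`.
The two ballots `D ∪ ({0, 1, 2} \ {r})` and `D ∪ {r}` score the same on all committees that keep
one of `0, 1, 2`, while among those that keep two they single out the one without `r` by the
second difference `ω (i + 2) - 2 ω (i + 1) + ω i ≠ 0`. Choosing such pairs according to the sign
of this difference, the first electorate may remove `2` and then `1`, the second `1` and then `2`,
so both may elect `Z ∪ {0}`, whereas together they must remove `0` first. Candidates approved by
nobody, removed in the first stages, pad the procedure to any number `t ≥ 2` of stages.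
-/

open Finset

section Score

variable {α : Type} [DecidableEq α] {ω : ℕ → ℝ}

theorem thieleScore_append (V W : List (Finset α)) (S : Finset α) :
    thieleScore ω (V ++ W) S = thieleScore ω V S + thieleScore ω W S := by
  simp [thieleScore]

theorem thieleScore_replicate (N : ℕ) (A S : Finset α) :
    thieleScore ω (List.replicate N A) S = N * ω #(S ∩ A) := by
  simp [thieleScore]

theorem thieleScore_congr {V : List (Finset α)} {S T : Finset α}
    (h : ∀ A ∈ V, S ∩ A = T ∩ A) : thieleScore ω V S = thieleScore ω V T := by
  unfold thieleScore
  congr 1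
  exact List.map_congr_left fun A hA => by rw [h A hA]

theorem thieleScore_mono (hmono : Monotone ω) (V : List (Finset α)) {S T : Finset α}
    (h : S ⊆ T) : thieleScore ω V S ≤ thieleScore ω V T :=
  List.sum_le_sum fun _ _ => hmono (card_le_card (inter_subset_inter_right h))

theorem thieleScore_nonneg (hmono : Monotone ω) (h0 : ω 0 = 0) (V : List (Finset α))
    (S : Finset α) : 0 ≤ thieleScore ω V S := by
  simpa [thieleScore, h0] using thieleScore_mono hmono V (empty_subset S)

theorem thieleScore_le_sum (hmono : Monotone ω) (V : List (Finset α)) (S : Finset α) :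
    thieleScore ω V S ≤ (V.map fun A => ω #A).sum :=
  List.sum_le_sum fun _ _ => hmono (card_le_card inter_subset_right)

theorem thieleScore_map_union {D S : Finset α} (Fs : List (Finset α)) (hDS : D ⊆ S)
    (hD : ∀ F ∈ Fs, Disjoint D F) :
    thieleScore ω (Fs.map (D ∪ ·)) S = thieleScore (fun j => ω (#D + j)) Fs S := by
  simp only [thieleScore, List.map_map]
  congr 1
  refine List.map_congr_left fun F hF => ?_
  simp only [Function.comp_apply, inter_union_distrib_left, inter_eq_right.mpr hDS]
  rw [card_union_of_disjoint ((hD F hF).mono_right inter_subset_right)]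

end Score

section Winners

variable {α : Type} [DecidableEq α] {ω : ℕ → ℝ} {V : List (Finset α)} {P : Finset α}

theorem exists_eq_erase_of_card_eq_card_sub_one {S : Finset α} (hP : P.Nonempty) (hSP : S ⊆ P)
    (hS : #S = #P - 1) : ∃ x ∈ P, S = P.erase x := by
  obtain ⟨x, hxS, rfl⟩ := exists_eq_insert_iff.mpr ⟨hSP, by have := hP.card_pos; omega⟩
  exact ⟨x, mem_insert_self x S, (erase_insert hxS).symm⟩

theorem erase_mem_thieleWinners_of_forall_le {x : α} (hx : x ∈ P)
    (h : ∀ y ∈ P, thieleScore ω V (P.erase y) ≤ thieleScore ω V (P.erase x)) :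
    P.erase x ∈ thieleWinners ω P V (#P - 1) := by
  refine ⟨erase_subset x P, card_erase_of_mem hx, fun T hTP hT => ?_⟩
  obtain ⟨y, hy, rfl⟩ := exists_eq_erase_of_card_eq_card_sub_one ⟨x, hx⟩ hTP hT
  exact h y hy

theorem erase_mem_thieleWinners_of_forall_notMem (hmono : Monotone ω) {d : α} (hd : d ∈ P)
    (hV : ∀ A ∈ V, d ∉ A) : P.erase d ∈ thieleWinners ω P V (#P - 1) := by
  refine erase_mem_thieleWinners_of_forall_le hd fun y _ => ?_
  rw [thieleScore_congr (S := P.erase d) (T := P) fun A hA => by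
    rw [erase_inter, erase_eq_of_notMem fun h => hV A hA (mem_of_mem_inter_right h)]]
  exact thieleScore_mono hmono V (erase_subset y P)

end Winners

section Forcing

variable {α : Type} [DecidableEq α] {ω : ℕ → ℝ}

def Forces (ω : ℕ → ℝ) (V : List (Finset α)) (Z : Finset α) : Prop :=
  ∀ S T, Z ⊆ T → ¬ Z ⊆ S → thieleScore ω V S < thieleScore ω V T

theorem Forces.append {V W : List (Finset α)} {Z : Finset α} (hV : Forces ω V Z)
    (hW : Forces ω W Z) : Forces ω (V ++ W) Z := fun S T hT hS => by
  simpa only [thieleScore_append] using add_lt_add (hV S T hT hS) (hW S T hT hS)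

theorem exists_forces (hmono : Monotone ω) (h0 : ω 0 = 0) {Z : Finset α}
    (hZ : ω (#Z - 1) < ω #Z) (W : List (Finset α)) :
    ∃ N : ℕ, Forces ω (List.replicate N Z ++ W) Z := by
  obtain ⟨N, hN⟩ := exists_nat_gt ((W.map fun A => ω #A).sum / (ω #Z - ω (#Z - 1)))
  refine ⟨N, fun S T hT hS => ?_⟩
  rw [div_lt_iff₀ (sub_pos.mpr hZ)] at hN
  have hSZ : ω #(S ∩ Z) ≤ ω (#Z - 1) := hmono <| Nat.le_sub_one_of_lt <|
    card_lt_card ⟨inter_subset_right, fun h => hS fun z hz => (mem_inter.mp (h hz)).1⟩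
  simp only [thieleScore_append, thieleScore_replicate, inter_eq_right.mpr hT]
  linarith [thieleScore_le_sum hmono W S, thieleScore_nonneg hmono h0 W T,
    mul_le_mul_of_nonneg_left hSZ (Nat.cast_nonneg (α := ℝ) N)]

variable {V : List (Finset α)} {Z P : Finset α}

theorem Forces.erase_mem_thieleWinners (hV : Forces ω V Z) (hZP : Z ⊆ P) {x : α} (hx : x ∈ P)
    (hxZ : x ∉ Z)
    (h : ∀ y ∈ P, y ∉ Z → thieleScore ω V (P.erase y) ≤ thieleScore ω V (P.erase x)) :
    P.erase x ∈ thieleWinners ω P V (#P - 1) := by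
  refine erase_mem_thieleWinners_of_forall_le hx fun y hy => ?_
  by_cases hyZ : y ∈ Z
  · exact (hV _ _ (subset_erase.mpr ⟨hZP, hxZ⟩) fun h => notMem_erase y P (h hyZ)).le
  · exact h y hy hyZ

theorem Forces.exists_eq_erase_of_mem_thieleWinners (hV : Forces ω V Z) (hZP : Z ⊆ P)
    {x₀ : α} (hx₀ : x₀ ∈ P) (hx₀Z : x₀ ∉ Z) {S : Finset α}
    (hS : S ∈ thieleWinners ω P V (#P - 1)) :
    ∃ x ∈ P, x ∉ Z ∧ S = P.erase x ∧
      ∀ y ∈ P, thieleScore ω V (P.erase y) ≤ thieleScore ω V (P.erase x) := by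
  obtain ⟨x, hx, rfl⟩ := exists_eq_erase_of_card_eq_card_sub_one ⟨x₀, hx₀⟩ hS.1 hS.2.1
  have hopt y (hy : y ∈ P) := hS.2.2 _ (erase_subset y P) (card_erase_of_mem hy)
  refine ⟨x, hx, fun hxZ => ?_, rfl, hopt⟩
  exact (hopt x₀ hx₀).not_gt
    (hV _ _ (subset_erase.mpr ⟨hZP, hx₀Z⟩) fun h => notMem_erase x P (h hxZ))

end Forcing

def unitStages : ℕ → ℕ → List ℕ
  | _, 0 => []
  | n, t + 1 => (n - 1) :: unitStages (n - 1) t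

@[simp]
theorem length_unitStages (n t : ℕ) : (unitStages n t).length = t := by
  induction t generalizing n <;> simp [unitStages, *]

theorem isChain_unitStages {n t : ℕ} (h : t ≤ n) : List.IsChain (· > ·) (n :: unitStages n t) := by
  induction t generalizing n with
  | zero => exact List.IsChain.singleton n
  | succ t ih => exact List.IsChain.cons_cons (by omega) (ih (by omega))

theorem le_of_mem_unitStages {n t k : ℕ} (hk : k ∈ unitStages n t) : n - t ≤ k := by
  induction t generalizing n with
  | zero => simp [unitStages] at hk
  | succ t ih =>
    rcases List.mem_cons.mp hk with rfl | hk
    · omega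
    · have := ih hk; omega

section Stages

variable {α : Type} [DecidableEq α] {ω : ℕ → ℝ} {V : List (Finset α)}

theorem self_mem_msThiele_unitStages_zero (S : Finset α) :
    S ∈ msThiele ω (unitStages #S 0) S V :=
  rfl

theorem mem_msThiele_unitStages_succ {C S₁ S : Finset α} {t : ℕ}
    (h₁ : S₁ ∈ thieleWinners ω C V (#C - 1)) (h : S ∈ msThiele ω (unitStages #S₁ t) S₁ V) :
    S ∈ msThiele ω (unitStages #C (t + 1)) C V :=
  ⟨S₁, h₁, by rwa [h₁.2.1] at h⟩

theorem mem_msThiele_unitStages_union (hmono : Monotone ω) {P S U : Finset α} {t : ℕ}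
    (hPU : Disjoint P U) (hV : ∀ A ∈ V, Disjoint A U)
    (hS : S ∈ msThiele ω (unitStages #P t) P V) :
    S ∈ msThiele ω (unitStages #(P ∪ U) (#U + t)) (P ∪ U) V := by
  induction U using Finset.induction_on with
  | empty => simpa using hS
  | insert d U hdU ih =>
    have hd : d ∉ P ∪ U := by simp [hdU, disjoint_insert_right.mp hPU |>.1]
    rw [union_insert, card_insert_of_notMem hdU, add_right_comm]
    refine mem_msThiele_unitStages_succ ?_ (ih (disjoint_insert_right.mp hPU).2
      fun A hA => (disjoint_insert_right.mp (hV A hA)).2)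
    simpa [erase_insert hd] using erase_mem_thieleWinners_of_forall_notMem hmono
      (mem_insert_self d (P ∪ U)) fun A hA => (disjoint_insert_right.mp (hV A hA)).1

theorem msThiele_unitStages_induction (I : Finset α → Prop) {C : Finset α} {t : ℕ}
    (ht : t ≤ #C) (hC : I C)
    (hstep : ∀ P, I P → #C - t < #P → ∀ S ∈ thieleWinners ω P V (#P - 1), I S) :
    ∀ S ∈ msThiele ω (unitStages #C t) C V, I S := by
  induction t generalizing C with
  | zero => rintro S rfl; exact hC
  | succ t ih =>
    rintro S ⟨S₁, hS₁, hS⟩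
    have hcard : #S₁ = #C - 1 := hS₁.2.1
    rw [← hcard] at hS
    exact ih (by omega) (hstep C hC (by omega) S₁ hS₁)
      (fun P hP hPc => hstep P hP (by omega)) S hS

end Stages

section Elimination

variable {α : Type} [DecidableEq α]

def IsBestRemoval (s : Finset α → ℝ) (X : Finset α) (x : α) : Prop :=
  x ∈ X ∧ ∀ y ∈ X, s (X.erase y) ≤ s (X.erase x)

def IsUniqueBestRemoval (s : Finset α → ℝ) (X : Finset α) (x : α) : Prop :=
  x ∈ X ∧ ∀ y ∈ X, y ≠ x → s (X.erase y) < s (X.erase x)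

theorem isBestRemoval_const_add_iff {s : Finset α → ℝ} {X : Finset α} {x : α} (c : ℝ) :
    IsBestRemoval (fun Y => c + s Y) X x ↔ IsBestRemoval s X x := by
  simp [IsBestRemoval]

theorem isUniqueBestRemoval_const_add_iff {s : Finset α → ℝ} {X : Finset α} {x : α} (c : ℝ) :
    IsUniqueBestRemoval (fun Y => c + s Y) X x ↔ IsUniqueBestRemoval s X x := by
  simp [IsUniqueBestRemoval]

variable {ω : ℕ → ℝ} {V : List (Finset α)} {Z X : Finset α}

theorem Forces.union_erase_mem_thieleWinners (hV : Forces ω V Z) (hZX : Disjoint Z X) {x : α}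
    (hx : IsBestRemoval (fun Y => thieleScore ω V (Z ∪ Y)) X x) :
    Z ∪ X.erase x ∈ thieleWinners ω (Z ∪ X) V (#(Z ∪ X) - 1) := by
  have herase {y} (hy : y ∈ X) : (Z ∪ X).erase y = Z ∪ X.erase y := by
    rw [erase_union_distrib, erase_eq_of_notMem (disjoint_right.mp hZX hy)]
  rw [← herase hx.1]
  refine hV.erase_mem_thieleWinners subset_union_left (mem_union_right Z hx.1)
    (disjoint_right.mp hZX hx.1) fun y hy hyZ => ?_
  have hyX : y ∈ X := (mem_union.mp hy).resolve_left hyZ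
  rw [herase hx.1, herase hyX]
  exact hx.2 y hyX

theorem Forces.mem_msThiele_of_isBestRemoval (hmono : Monotone ω) (hV : Forces ω V Z)
    (hZX : Disjoint Z X) {U : Finset α} (hU : Disjoint (Z ∪ X) U)
    (hVU : ∀ A ∈ V, A ⊆ Z ∪ X) {b c : α}
    (hc : IsBestRemoval (fun Y => thieleScore ω V (Z ∪ Y)) X c)
    (hb : IsBestRemoval (fun Y => thieleScore ω V (Z ∪ Y)) (X.erase c) b) :
    Z ∪ (X.erase c).erase b ∈ msThiele ω (unitStages #(Z ∪ X ∪ U) (#U + 2)) (Z ∪ X ∪ U) V :=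
  mem_msThiele_unitStages_union hmono hU (fun A hA => hU.mono_left (hVU A hA)) <|
    mem_msThiele_unitStages_succ (hV.union_erase_mem_thieleWinners hZX hc) <|
    mem_msThiele_unitStages_succ
      (hV.union_erase_mem_thieleWinners (hZX.mono_right (erase_subset c X)) hb)
      (self_mem_msThiele_unitStages_zero _)

theorem Forces.imp_subset_of_mem_msThiele (hV : Forces ω V Z) (hZX : Disjoint Z X)
    (hVZX : ∀ A ∈ V, A ⊆ Z ∪ X) {a : α}
    (ha : IsUniqueBestRemoval (fun Y => thieleScore ω V (Z ∪ Y)) X a)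
    {C : Finset α} (hC : Z ∪ X ⊆ C) {t : ℕ} (ht : #Z + t ≤ #C) :
    ∀ S ∈ msThiele ω (unitStages #C t) C V, a ∈ S → X ⊆ S := by
  have hscore {P : Finset α} (hP : Z ∪ X ⊆ P) {y : α} (hy : y ∈ X) :
      thieleScore ω V (P.erase y) = thieleScore ω V (Z ∪ X.erase y) :=
    thieleScore_congr fun A hA => by
      ext z
      have := @hVZX A hA z
      have := disjoint_right.mp hZX hy
      simp only [mem_inter, mem_erase, mem_union]
      grind
  refine fun S hS => (msThiele_unitStages_induction (fun P => Z ⊆ P ∧ (a ∈ P → X ⊆ P))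
    (by omega) ⟨subset_union_left.trans hC, fun _ => subset_union_right.trans hC⟩
    (fun P ⟨hZP, hXP⟩ hP S hS => ?_) S hS).2
  obtain ⟨x₀, hx₀, hx₀Z⟩ := exists_mem_notMem_of_card_lt_card (s := Z) (t := P) (by omega)
  obtain ⟨x, hx, hxZ, rfl, hopt⟩ := hV.exists_eq_erase_of_mem_thieleWinners hZP hx₀ hx₀Z hS
  refine ⟨subset_erase.mpr ⟨hZP, hxZ⟩, fun haS => subset_erase.mpr ⟨hXP (mem_of_mem_erase haS),
    fun hxX => ?_⟩⟩
  have hXP' := union_subset hZP (hXP (mem_of_mem_erase haS))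
  have := hopt a (mem_of_mem_erase haS)
  rw [hscore hXP' ha.1, hscore hXP' hxX] at this
  exact this.not_gt (ha.2 x hxX (ne_of_mem_erase haS).symm)

end Elimination

section Counterexample

variable {α : Type} [DecidableEq α] {ω : ℕ → ℝ}

theorem thieleScore_replicate_append_map_union (N : ℕ) {Z D : Finset α} (Fs : List (Finset α))
    (hDZ : D ⊆ Z) (hZF : ∀ F ∈ Fs, Disjoint Z F) (Y : Finset α) :
    thieleScore ω (List.replicate N Z ++ Fs.map (D ∪ ·)) (Z ∪ Y) =
      N * ω #Z + thieleScore (fun j => ω (#D + j)) Fs Y := by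
  rw [thieleScore_append, thieleScore_replicate, union_inter_cancel_left,
    thieleScore_map_union Fs (hDZ.trans subset_union_left) fun F hF => (hZF F hF).mono_left hDZ]
  congr 1
  refine thieleScore_congr fun F hF => ?_
  rw [union_inter_distrib_right, disjoint_iff_inter_eq_empty.mp (hZF F hF), empty_union]

theorem subset_union_of_mem_replicate_append_map_union {N : ℕ} {Z D X : Finset α}
    {Fs : List (Finset α)} (hDZ : D ⊆ Z) (hFs : ∀ F ∈ Fs, F ⊆ X) :
    ∀ A ∈ List.replicate N Z ++ Fs.map (D ∪ ·), A ⊆ Z ∪ X := by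
  simp only [List.mem_append, List.mem_replicate, List.mem_map]
  rintro A (⟨-, rfl⟩ | ⟨F, hF, rfl⟩)
  · exact subset_union_left
  · exact union_subset_union hDZ (hFs F hF)

theorem not_msThieleConsistent_of_forces (hmono : Monotone ω) {Z X U : Finset α}
    (hZX : Disjoint Z X) (hU : Disjoint (Z ∪ X) U) {V₁ V₂ : List (Finset α)}
    (hV₁ : ∀ A ∈ V₁, A ⊆ Z ∪ X) (hV₂ : ∀ A ∈ V₂, A ⊆ Z ∪ X)
    (hf₁ : Forces ω V₁ Z) (hf₂ : Forces ω V₂ Z) {a b c : α} (hX : X = {a, b, c})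
    (hab : a ≠ b) (hac : a ≠ c) (hbc : b ≠ c)
    (hc₁ : IsBestRemoval (fun Y => thieleScore ω V₁ (Z ∪ Y)) X c)
    (hb₁ : IsBestRemoval (fun Y => thieleScore ω V₁ (Z ∪ Y)) (X.erase c) b)
    (hb₂ : IsBestRemoval (fun Y => thieleScore ω V₂ (Z ∪ Y)) X b)
    (hc₂ : IsBestRemoval (fun Y => thieleScore ω V₂ (Z ∪ Y)) (X.erase b) c)
    (ha : IsUniqueBestRemoval (fun Y => thieleScore ω (V₁ ++ V₂) (Z ∪ Y)) X a) :
    ¬ MSThieleConsistent ω (#U + 2) := by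
  intro hcons
  have hcard : #(Z ∪ X ∪ U) = #Z + 3 + #U := by
    rw [card_union_of_disjoint hU, card_union_of_disjoint hZX, hX,
      card_eq_three.mpr ⟨a, b, c, hab, hac, hbc, rfl⟩]
  have hsub {V : List (Finset α)} (hV : ∀ A ∈ V, A ⊆ Z ∪ X) A (hA : A ∈ V) : A ⊆ Z ∪ X ∪ U :=
    (hV A hA).trans subset_union_left
  have hmem₁ := hf₁.mem_msThiele_of_isBestRemoval hmono hZX hU hV₁ hc₁ hb₁
  have hmem₂ := hf₂.mem_msThiele_of_isBestRemoval hmono hZX hU hV₂ hb₂ hc₂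
  have hcb : (X.erase c).erase b = {a} := by subst hX; grind
  have hbc' : (X.erase b).erase c = {a} := by subst hX; grind
  rw [hcb] at hmem₁
  rw [hbc'] at hmem₂
  have heq := hcons α (Z ∪ X ∪ U) V₁ V₂ (hsub hV₁) (hsub hV₂) _ (by simp [unitStages])
    (length_unitStages _ _) (isChain_unitStages (by omega))
    (fun k hk => by have := le_of_mem_unitStages hk; omega) ⟨_, hmem₁, hmem₂⟩
  have hmem : Z ∪ {a} ∈ msThiele ω (unitStages #(Z ∪ X ∪ U) (#U + 2)) (Z ∪ X ∪ U) (V₁ ++ V₂) := by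
    rw [heq]; exact ⟨hmem₁, hmem₂⟩
  have hXa := (hf₁.append hf₂).imp_subset_of_mem_msThiele hZX
    (fun A hA => (List.mem_append.mp hA).elim (hV₁ A) (hV₂ A)) ha
    subset_union_left (by omega) _ hmem (by simp)
  have hb : b ∈ X := by simp [hX]
  have := hXa hb
  simp only [mem_union, mem_singleton] at this
  exact this.elim (disjoint_right.mp hZX hb) (Ne.symm hab)

end Counterexample

structure EliminationGadget (ω : ℕ → ℝ) (Fs₁ Fs₂ : List (Finset ℕ)) : Prop where
  subset : ∀ F ∈ Fs₁ ++ Fs₂, F ⊆ {0, 1, 2}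
  left_first : IsBestRemoval (thieleScore ω Fs₁) {0, 1, 2} 2
  left_second : IsBestRemoval (thieleScore ω Fs₁) {0, 1} 1
  right_first : IsBestRemoval (thieleScore ω Fs₂) {0, 1, 2} 1
  right_second : IsBestRemoval (thieleScore ω Fs₂) {0, 2} 2
  sum_first : IsUniqueBestRemoval (thieleScore ω (Fs₁ ++ Fs₂)) {0, 1, 2} 0

theorem eliminationGadget_of_convex {ω : ℕ → ℝ} (h : ω 1 - ω 0 < ω 2 - ω 1) :
    EliminationGadget ω [{1, 2}, {0}, {0, 1}, {2}] [{1, 2}, {0}, {0, 2}, {1}] := by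
  refine ⟨by decide, ⟨by decide, ?_⟩, ⟨by decide, ?_⟩, ⟨by decide, ?_⟩, ⟨by decide, ?_⟩,
    ⟨by decide, ?_⟩⟩ <;> simp [thieleScore] <;> (try constructor) <;> linarith

theorem eliminationGadget_of_concave {ω : ℕ → ℝ} (h : ω 2 - ω 1 < ω 1 - ω 0) :
    EliminationGadget ω [{0, 2}, {1}] [{0, 1}, {2}] := by
  refine ⟨by decide, ⟨by decide, ?_⟩, ⟨by decide, ?_⟩, ⟨by decide, ?_⟩, ⟨by decide, ?_⟩,
    ⟨by decide, ?_⟩⟩ <;> simp [thieleScore] <;> (try constructor) <;> linarith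

theorem exists_eliminationGadget {ω : ℕ → ℝ} (h : ω 1 - ω 0 ≠ ω 2 - ω 1) :
    ∃ Fs₁ Fs₂, EliminationGadget ω Fs₁ Fs₂ :=
  h.lt_or_gt.elim (fun h => ⟨_, _, eliminationGadget_of_convex h⟩)
    fun h => ⟨_, _, eliminationGadget_of_concave h⟩

theorem exists_le_lt_succ_of_ne {ω : ℕ → ℝ} (hmono : Monotone ω) {i : ℕ}
    (h : ω (i + 1) - ω i ≠ ω (i + 2) - ω (i + 1)) : ∃ n, i ≤ n ∧ ω n < ω (n + 1) := by
  rcases (hmono (Nat.le_succ i)).lt_or_eq with hi | hi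
  · exact ⟨i, le_rfl, hi⟩
  · refine ⟨i + 1, Nat.le_succ i, (hmono (Nat.le_succ (i + 1))).lt_of_ne fun h' => h ?_⟩
    rw [hi, ← h']

theorem not_msThieleConsistent_of_eliminationGadget {ω : ℕ → ℝ} (hmono : Monotone ω)
    (h0 : ω 0 = 0) {i n : ℕ} (hin : i ≤ n) (hn : ω n < ω (n + 1)) {Fs₁ Fs₂ : List (Finset ℕ)}
    (hg : EliminationGadget (fun j => ω (i + j)) Fs₁ Fs₂) (u : ℕ) :
    ¬ MSThieleConsistent ω (u + 2) := by
  set Z := Ico 3 (n + 4)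
  set D := Ico 3 (i + 3)
  set U := Ico (n + 4) (n + 4 + u)
  have hDZ : D ⊆ Z := Ico_subset_Ico_right (by omega)
  have hZX : Disjoint Z {0, 1, 2} := by simp [Z]
  have hU : Disjoint (Z ∪ {0, 1, 2}) U :=
    disjoint_union_left.mpr ⟨Ico_disjoint_Ico_consecutive 3 (n + 4) (n + 4 + u), by simp [U]⟩
  have hZF {Fs : List (Finset ℕ)} (hFs : ∀ F ∈ Fs, F ⊆ {0, 1, 2}) F (hF : F ∈ Fs) :
      Disjoint Z F := hZX.mono_right (hFs F hF)
  have hscore N {Fs : List (Finset ℕ)} (hFs : ∀ F ∈ Fs, F ⊆ {0, 1, 2}) :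
      (fun Y => thieleScore ω (List.replicate N Z ++ Fs.map (D ∪ ·)) (Z ∪ Y)) =
        fun Y => N * ω #Z + thieleScore (fun j => ω (i + j)) Fs Y := by
    funext Y
    simpa [D] using thieleScore_replicate_append_map_union N Fs hDZ (hZF hFs) Y
  have hFs₁ F (hF : F ∈ Fs₁) := hg.subset F (List.mem_append_left Fs₂ hF)
  have hFs₂ F (hF : F ∈ Fs₂) := hg.subset F (List.mem_append_right Fs₁ hF)
  obtain ⟨N₁, hf₁⟩ := exists_forces hmono h0 (Z := Z) (by simpa [Z] using hn) (Fs₁.map (D ∪ ·))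
  obtain ⟨N₂, hf₂⟩ := exists_forces hmono h0 (Z := Z) (by simpa [Z] using hn) (Fs₂.map (D ∪ ·))
  have hsum : (fun Y => thieleScore ω ((List.replicate N₁ Z ++ Fs₁.map (D ∪ ·)) ++
      (List.replicate N₂ Z ++ Fs₂.map (D ∪ ·))) (Z ∪ Y)) =
        fun Y => (N₁ * ω #Z + N₂ * ω #Z) + thieleScore (fun j => ω (i + j)) (Fs₁ ++ Fs₂) Y := by
    funext Y
    have h₁ := congrFun (hscore N₁ hFs₁) Y
    have h₂ := congrFun (hscore N₂ hFs₂) Y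
    simp only [thieleScore_append] at h₁ h₂ ⊢
    linarith
  have hUcard : #U = u := by simp [U]
  rw [← hUcard]
  refine not_msThieleConsistent_of_forces hmono hZX hU
    (subset_union_of_mem_replicate_append_map_union hDZ hFs₁)
    (subset_union_of_mem_replicate_append_map_union hDZ hFs₂) hf₁ hf₂ rfl (b := 1) (c := 2)
    (by decide) (by decide) (by decide) ?_ ?_ ?_ ?_ ?_
  · rw [hscore N₁ hFs₁, isBestRemoval_const_add_iff]; exact hg.left_first
  · rw [hscore N₁ hFs₁, isBestRemoval_const_add_iff]; exact hg.left_second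
  · rw [hscore N₂ hFs₂, isBestRemoval_const_add_iff]; exact hg.right_first
  · rw [hscore N₂ hFs₂, isBestRemoval_const_add_iff]; exact hg.right_second
  · rw [hsum, isUniqueBestRemoval_const_add_iff]; exact hg.sum_first

theorem multistage_thiele_not_consistent_general
    (t : ℕ) (ht : 2 ≤ t) (ω : ℕ → ℝ)
    (hmono : Monotone ω) (h0 : ω 0 = 0)
    (hi : ∃ i₀ : ℕ, 2 ≤ i₀ ∧ ω (i₀ - 1) - ω (i₀ - 2) ≠ ω i₀ - ω (i₀ - 1)) :
    ¬ MSThieleConsistent ω t := by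
  obtain ⟨i₀, hi₀, hne⟩ := hi
  obtain ⟨i, rfl⟩ := Nat.exists_eq_add_of_le' hi₀
  obtain ⟨u, rfl⟩ := Nat.exists_eq_add_of_le' ht
  simp only [Nat.add_sub_cancel, show i + 2 - 1 = i + 1 by omega] at hne
  obtain ⟨n, hin, hn⟩ := exists_le_lt_succ_of_ne hmono hne
  obtain ⟨Fs₁, Fs₂, hg⟩ := exists_eliminationGadget (ω := fun j => ω (i + j)) hne
  exact not_msThieleConsistent_of_eliminationGadget hmono h0 hin hn hg u

/-- Let `t ≥ 2` and let `𝓡` be the `t`-stage ω-Thiele rule,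
where the single-stage ω-Thiele rule satisfies Consistency and
`ω(i₀−1) − ω(i₀−2) ≠ ω(i₀) − ω(i₀−1)` for some integer `i₀ ≥ 2`.  Then `𝓡` does
not satisfy Consistency. -/
theorem multistage_thiele_not_consistent
    (t : ℕ) (ht : 2 ≤ t) (ω : ℕ → ℝ)
    (hmono : Monotone ω) (h0 : ω 0 = 0)
    (hcons : ThieleConsistent ω)
    (hi : ∃ i₀ : ℕ, 2 ≤ i₀ ∧ ω (i₀ - 1) - ω (i₀ - 2) ≠ ω i₀ - ω (i₀ - 1)) :
    ¬ MSThieleConsistent ω t :=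
  multistage_thiele_not_consistent_general t ht ω hmono h0 hi
end
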